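/- Let E be a finite nonempty set equipped with a circular order, and let e ∈ E be a distinguished element. Then there exists a unique linear order ≤ on E such that e is the least element of (E, ≤) and the circular order induced by ≤ coincides with the given circular order on E. -/

import Mathlib

namespace CircAux

variable {E : Type} [CircularOrder E]

theorem sbtw_of_btw_of_ne {a b c : E} (h : btw a b c) (hab : a ≠ b) (hbc : b ≠ c)
    (hca : c ≠ a) : sbtw a b c := by
  refine h.sbtw_of_not_btw fun h' => ?_
  rcases h.antisymm h' with h'' | h'' | h''
  exacts [hab h'', hbc h'', hca h'']

/-- The linear order obtained by cutting the circular order at `e`. -/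
def r (e a b : E) : Prop := btw e a b ∧ (b = e → a = e)

theorem r_refl (e a : E) : r e a a := ⟨btw_rfl_right, id⟩

theorem r_least (e x : E) : r e e x := ⟨btw_rfl_left, fun _ => rfl⟩

theorem r_total (e a b : E) : r e a b ∨ r e b a := by
  by_cases hae : a = e
  · exact Or.inl (hae ▸ r_least e b)
  by_cases hbe : b = e
  · exact Or.inr (hbe ▸ r_least e a)
  rcases btw_total e a b with h | h
  · exact Or.inl ⟨h, fun hb => absurd hb hbe⟩
  · exact Or.inr ⟨h.cyclic_left.cyclic_left, fun ha => absurd ha hae⟩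

theorem r_antisymm (e : E) {a b : E} (h1 : r e a b) (h2 : r e b a) : a = b := by
  rcases btw_antisymm h1.1 h2.1.cyclic_left with h | h | h
  · exact (h2.2 h.symm).symm ▸ h.symm
  · exact h
  · exact (h1.2 h).trans h.symm

theorem r_trans (e : E) {a b c : E} (h1 : r e a b) (h2 : r e b c) : r e a c := by
  refine ⟨?_, fun hc => h1.2 (h2.2 hc)⟩
  by_cases hae : a = e
  · subst hae; exact btw_rfl_left
  by_cases hbe : b = e
  · rw [h1.2 hbe]; exact btw_rfl_left
  by_cases hce : c = e
  · subst hce; exact btw_rfl_left_right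
  by_cases hab : a = b
  · subst hab; exact h2.1
  by_cases hbc : b = c
  · subst hbc; exact h1.1
  by_cases hac : a = c
  · subst hac; exact btw_rfl_right
  have s1 : sbtw e a b :=
    sbtw_of_btw_of_ne h1.1 (fun h => hae h.symm) hab hbe
  have s2 : sbtw e b c :=
    sbtw_of_btw_of_ne h2.1 (fun h => hbe h.symm) hbc hce
  exact (s1.trans_right s2).btw

theorem btw_of_r (e : E) {a b c : E} (h1 : r e a b) (h2 : r e b c) : btw a b c := by
  by_cases hab : a = b
  · subst hab; exact btw_rfl_left
  by_cases hbc : b = c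
  · subst hbc; exact btw_rfl_right
  by_cases hae : a = e
  · subst hae; exact h2.1
  by_cases hbe : b = e
  · exact absurd (h1.2 hbe) hae
  by_cases hce : c = e
  · subst hce; exact h1.1.cyclic_left
  by_cases hac : a = c
  · exact absurd (r_antisymm e h1 (hac ▸ h2)) hab
  have s1 : sbtw e a b :=
    sbtw_of_btw_of_ne h1.1 (fun h => hae h.symm) hab hbe
  have s2 : sbtw e b c :=
    sbtw_of_btw_of_ne h2.1 (fun h => hbe h.symm) hbc hce
  by_contra h
  have s3 : sbtw c b a := sbtw_iff_not_btw.2 h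
  exact s2.not_sbtw ((s1.cyclic_left.cyclic_left.trans_right s3.cyclic_left).cyclic_right)

theorem btw_iff (e a b c : E) :
    btw a b c ↔ (r e a b ∧ r e b c) ∨ (r e b c ∧ r e c a) ∨ (r e c a ∧ r e a b) := by
  constructor
  · intro h
    have deg : a = b ∨ b = c ∨ c = a →
        (r e a b ∧ r e b c) ∨ (r e b c ∧ r e c a) ∨ (r e c a ∧ r e a b) := by
      rintro (rfl | rfl | rfl)
      · rcases r_total e a c with h' | h'
        · exact Or.inl ⟨r_refl e a, h'⟩
        · exact Or.inr (Or.inr ⟨h', r_refl e a⟩)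
      · rcases r_total e a b with h' | h'
        · exact Or.inl ⟨h', r_refl e b⟩
        · exact Or.inr (Or.inl ⟨r_refl e b, h'⟩)
      · rcases r_total e c b with h' | h'
        · exact Or.inr (Or.inr ⟨r_refl e c, h'⟩)
        · exact Or.inr (Or.inl ⟨h', r_refl e c⟩)
    rcases r_total e a b with hab | hba <;> rcases r_total e b c with hbc | hcb <;>
      rcases r_total e c a with hca | hac
    · exact Or.inl ⟨hab, hbc⟩
    · exact Or.inl ⟨hab, hbc⟩
    · exact Or.inr (Or.inr ⟨hca, hab⟩)
    · exact deg (btw_antisymm h ((btw_of_r e hac hcb).cyclic_left))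
    · exact Or.inr (Or.inl ⟨hbc, hca⟩)
    · exact deg (btw_antisymm h ((btw_of_r e hba hac).cyclic_left.cyclic_left))
    · exact deg (btw_antisymm h (btw_of_r e hcb hba))
    · exact deg (btw_antisymm h ((btw_of_r e hba hac).cyclic_left.cyclic_left))
  · rintro (⟨h1, h2⟩ | ⟨h1, h2⟩ | ⟨h1, h2⟩)
    · exact btw_of_r e h1 h2
    · exact (btw_of_r e h1 h2).cyclic_right
    · exact (btw_of_r e h1 h2).cyclic_left

end CircAux

/-- Let `E` be a finite nonempty set equipped with a circular order, and let
`e ∈ E` be a distinguished element.  Then there exists a unique linear order `≤` on `E` such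
that `e` is the least element of `(E, ≤)` and the circular order induced by `≤` coincides with
the given circular order on `E`. -/
theorem circularOrder_exists_unique_linearOrder_with_least
    (E : Type) [Fintype E] [Nonempty E] [CircularOrder E] (e : E) :
    ∃! r : E → E → Prop, IsLinearOrder E r ∧ (∀ x : E, r e x) ∧
      (∀ a b c : E, btw a b c ↔ (r a b ∧ r b c) ∨ (r b c ∧ r c a) ∨ (r c a ∧ r a b)) := by
  refine ⟨CircAux.r e, ⟨?_, CircAux.r_least e, fun a b c => CircAux.btw_iff e a b c⟩, ?_⟩
  · exact { refl := CircAux.r_refl e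
            trans := fun a b c h1 h2 => CircAux.r_trans e h1 h2
            antisymm := fun a b h1 h2 => CircAux.r_antisymm e h1 h2
            total := CircAux.r_total e }
  · rintro r' ⟨hlin, hleast, hbtw⟩
    have hanti : ∀ a b : E, r' a b → r' b a → a = b :=
      fun a b => hlin.toIsPartialOrder.toAntisymm.antisymm a b
    funext a b
    apply propext
    constructor
    · intro h
      refine ⟨(hbtw e a b).2 (Or.inl ⟨hleast a, h⟩), fun hbe => ?_⟩
      subst hbe
      exact hanti a b h (hleast a)
    · rintro ⟨hb, hside⟩
      rcases (hbtw e a b).1 hb with ⟨_, h⟩ | ⟨h, _⟩ | ⟨hbe', _⟩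
      · exact h
      · exact h
      · have hbe : b = e := hanti b e hbe' (hleast b)
        rw [hside hbe]
        exact hleast b
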